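/- Let Y = Y' ∪ Circ_n be a graph with an n-handle, i.e., Y' and the cycle Circ_n share exactly one edge (and its two endpoints), n ≥ 3. Then κ(Y) = (n−1)·κ(Y'). -/

import Mathlib

/-- An orientation of a simple graph: a choice of direction for each edge. -/
structure GraphOrientation {V : Type*} (G : SimpleGraph V) where
  dir : V → V → Prop
  consistent : ∀ u v, G.Adj u v ↔ (dir u v ∨ dir v u)
  asymm : ∀ u v, dir u v → ¬ dir v u

/-- An orientation is acyclic if its directed graph has no directed cycle. -/
def GraphOrientation.IsAcyclic {V : Type*} {G : SimpleGraph V} (O : GraphOrientation G) : Prop :=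
  ∀ v, ¬ Relation.TransGen O.dir v v

/-- The type of acyclic orientations of `G`. -/
def AcycGraphOrientation {V : Type*} (G : SimpleGraph V) := {O : GraphOrientation G // O.IsAcyclic}

/-- `Click O O'` holds when `O'` is obtained from `O` by a source-to-sink operation:
reversing all edges incident to some source vertex `v`. -/
def Click {V : Type*} {G : SimpleGraph V} (O O' : GraphOrientation G) : Prop :=
  ∃ v, (∀ u, ¬ O.dir u v) ∧
    ∀ u w, O'.dir u w ↔ (((u = v ∨ w = v) ∧ O.dir w u) ∨ (u ≠ v ∧ w ≠ v ∧ O.dir u w))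

/-- κ(G): the number of equivalence classes of acyclic orientations of `G` under the
equivalence generated by source-to-sink operations. -/
noncomputable def kappa {V : Type*} (G : SimpleGraph V) : ℕ :=
  Nat.card (Quot (fun A B : AcycGraphOrientation G => Click A.1 B.1))

/-- The graph obtained from `G'` by attaching a handle: a path of `k ≥ 1` new vertices
`v - 0 - 1 - ⋯ - (k-1) - w` joining the adjacent vertices `v` and `w` of `G'`, so that
the new path together with the edge `{v, w}` forms a cycle of length `k + 2` sharing
exactly the edge `{v, w}` with `G'`. -/
def handleGraph {V' : Type*} (G' : SimpleGraph V') (v w : V') (k : ℕ) :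
    SimpleGraph (V' ⊕ Fin k) :=
  SimpleGraph.fromRel (fun x y =>
    match x, y with
    | .inl a, .inl b => G'.Adj a b
    | .inl a, .inr i => (a = v ∧ (i : ℕ) = 0) ∨ (a = w ∧ (i : ℕ) = k - 1)
    | .inr i, .inr j => (j : ℕ) = (i : ℕ) + 1
    | _, _ => False)

/-! Let `C` be the cycle of length `k + 2` formed by the handle and the edge `{v, w}`, and let
`ν(O) = #(fwdSet O)` count the edges of `C` that `O` directs along a fixed traversal of `C`.
A click at a vertex of `C` turns one forward edge backward and the preceding backward edge
forward, so `ν` is a click invariant, and it lies in `[1, k + 1]` for acyclic `O`. Clicking the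
sources inside the handle pushes the forward handle edges towards `v`, so every class contains
the canonical extension determined by the restriction to `G'` and by `ν`; clicks in `G'` lift to
these canonical extensions. Hence the classes of the handle graph correspond to pairs
(class of `G'`, value of `ν`). -/

open Finset

theorem Fin.val_add_one_eq_ite {m : ℕ} (j : Fin (m + 1)) :
    ((j + 1 : Fin (m + 1)) : ℕ) = if (j : ℕ) = m then 0 else (j : ℕ) + 1 := by
  rw [Fin.val_add_one]
  simp [Fin.ext_iff]

theorem Fin.add_one_ne_self {m : ℕ} (j : Fin (m + 2)) : j + 1 ≠ j := by
  intro h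
  have := congrArg Fin.val h
  rw [Fin.val_add_one_eq_ite] at this
  split_ifs at this <;> omega

theorem Nat.exists_forall_iff_lt_of_succ_imp {P : ℕ → Prop} {N : ℕ}
    (h : ∀ m, m + 1 < N → P (m + 1) → P m) : ∃ p ≤ N, ∀ m < N, (P m ↔ m < p) := by
  induction N with
  | zero => exact ⟨0, le_rfl, by simp⟩
  | succ N ih =>
    obtain ⟨p, hpN, hp⟩ := ih fun m hm => h m (by omega)
    by_cases hN : p = N ∧ P N
    · refine ⟨N + 1, le_rfl, fun m hm => ?_⟩
      rcases Nat.lt_succ_iff_lt_or_eq.1 hm with hm | rfl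
      · rw [hp m hm]
        omega
      · exact iff_of_true hN.2 hm
    · have hPN : ¬P N := fun hPN => by
        have hpN' : p < N := lt_of_le_of_ne hpN fun h' => hN ⟨h', hPN⟩
        obtain ⟨N, rfl⟩ := Nat.exists_eq_add_one.2 (by omega : 0 < N)
        have := (hp N (by omega)).1 (h N (by omega) hPN)
        omega
      refine ⟨p, by omega, fun m hm => ?_⟩
      rcases Nat.lt_succ_iff_lt_or_eq.1 hm with hm | rfl
      · exact hp m hm
      · exact iff_of_false hPN (by omega)

namespace Relation

variable {α : Type*} {r : α → α → Prop}

open Fin.NatCast in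
theorem transGen_of_cycle {N : ℕ} [NeZero N] (x : Fin N → α) (h : ∀ j, r (x j) (x (j + 1))) :
    TransGen r (x 0) (x 0) := by
  have key : ∀ m : ℕ, TransGen r (x 0) (x ((m + 1 : ℕ) : Fin N)) := by
    intro m
    induction m with
    | zero => simpa using TransGen.single (h 0)
    | succ m ih => exact ih.tail (by simpa using h ((m + 1 : ℕ) : Fin N))
  have := key (N - 1)
  rwa [Nat.sub_add_cancel NeZero.one_le, Fin.natCast_self] at this

theorem exists_rank [Finite α] (hr : ∀ x, ¬TransGen r x x) (d : ℕ) :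
    ∃ f : α → ℕ, ∀ x y, r x y → f x + d < f y := by
  classical
  have := Fintype.ofFinite α
  refine ⟨fun x => (d + 1) * #{z | TransGen r z x}, fun x y hxy => ?_⟩
  have : #{z | TransGen r z x} < #{z | TransGen r z y} := by
    refine card_lt_card ⟨fun z hz => ?_, fun hsub => ?_⟩
    · simp only [mem_filter, mem_univ, true_and] at hz ⊢
      exact hz.tail hxy
    · have hx : x ∈ ({z | TransGen r z y} : Finset α) := by simpa using TransGen.single hxy
      exact hr x (by simpa using hsub hx)
  nlinarith

theorem transGen_adjoin {a b x y : α} (h : TransGen (fun x y => r x y ∨ x = a ∧ y = b) x y) :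
    TransGen r x y ∨ ReflTransGen r x a ∧ ReflTransGen r b y := by
  induction h with
  | single h =>
    rcases h with h | ⟨rfl, rfl⟩
    · exact .inl (.single h)
    · exact .inr ⟨.refl, .refl⟩
  | tail _ h ih =>
    rcases h with h | ⟨rfl, rfl⟩
    · exact ih.imp (·.tail h) fun ⟨h₁, h₂⟩ => ⟨h₁, h₂.tail h⟩
    · exact .inr ⟨ih.elim (·.to_reflTransGen) (·.1), .refl⟩

theorem exists_rank_of_not_transGen [Finite α] (hr : ∀ x, ¬TransGen r x x) {a b : α}
    (hab : a ≠ b) (hba : ¬TransGen r b a) (d : ℕ) :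
    ∃ f : α → ℕ, (∀ x y, r x y → f x + d < f y) ∧ f a + d < f b := by
  have hacyc : ∀ x, ¬TransGen (fun x y => r x y ∨ x = a ∧ y = b) x x := by
    intro x hx
    rcases transGen_adjoin hx with h | ⟨h₁, h₂⟩
    · exact hr x h
    · rcases (h₂.trans h₁).cases_head with rfl | ⟨c, hc, hc'⟩
      · exact hab rfl
      · exact hba (TransGen.head' hc hc')
  obtain ⟨f, hf⟩ := exists_rank hacyc d
  exact ⟨f, fun x y h => hf x y (.inl h), hf a b (.inr ⟨rfl, rfl⟩)⟩

end Relation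

namespace GraphOrientation

open Relation

variable {V : Type*} {G : SimpleGraph V}

theorem ext {O O' : GraphOrientation G} (h : ∀ x y, O.dir x y ↔ O'.dir x y) : O = O' := by
  obtain ⟨d, _, _⟩ := O
  obtain ⟨d', _, _⟩ := O'
  obtain rfl : d = d' := funext fun x => funext fun y => propext (h x y)
  rfl

theorem adj_of_dir (O : GraphOrientation G) {x y : V} (h : O.dir x y) : G.Adj x y :=
  (O.consistent x y).2 (.inl h)

theorem dir_of_adj (O : GraphOrientation G) {x y : V} (h : G.Adj x y) (h' : ¬O.dir y x) :
    O.dir x y :=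
  ((O.consistent x y).1 h).resolve_right h'

def IsSource (O : GraphOrientation G) (x : V) : Prop := ∀ u, ¬O.dir u x

def clickAt (O : GraphOrientation G) (x : V) : GraphOrientation G where
  dir u w := ((u = x ∨ w = x) ∧ O.dir w u) ∨ (u ≠ x ∧ w ≠ x ∧ O.dir u w)
  consistent u w := by
    rw [O.consistent u w]
    by_cases hu : u = x <;> by_cases hw : w = x <;> simp [hu, hw, or_comm]
  asymm u w := by
    have := O.asymm u w
    have := O.asymm w u
    tauto

theorem click_iff {O O' : GraphOrientation G} :
    Click O O' ↔ ∃ x, O.IsSource x ∧ O' = O.clickAt x :=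
  exists_congr fun _ => and_congr_right fun _ =>
    ⟨fun h => ext h, fun h => h ▸ fun _ _ => Iff.rfl⟩

theorem clickAt_dir_of_ne (O : GraphOrientation G) {x u y : V} (hu : u ≠ x) (hy : y ≠ x) :
    (O.clickAt x).dir u y ↔ O.dir u y := by
  simp [clickAt, hu, hy]

theorem not_clickAt_dir_of_isSource {O : GraphOrientation G} {x : V} (hx : O.IsSource x)
    (y : V) : ¬(O.clickAt x).dir x y := by
  simp [clickAt, hx y]

theorem IsAcyclic.clickAt {O : GraphOrientation G} (hO : O.IsAcyclic) {x : V}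
    (hx : O.IsSource x) : (O.clickAt x).IsAcyclic := by
  have hne : ∀ {a b}, TransGen (O.clickAt x).dir a b → a ≠ x := by
    rintro a b h rfl
    obtain ⟨c, h', -⟩ := TransGen.head'_iff.1 h
    exact not_clickAt_dir_of_isSource hx c h'
  have hlift : ∀ {a b}, TransGen (O.clickAt x).dir a b → b ≠ x → TransGen O.dir a b := by
    intro a b h
    induction h with
    | single h => exact fun hb => .single ((O.clickAt_dir_of_ne (hne (.single h)) hb).1 h)
    | @tail b c _ h ih =>
      have hb : b ≠ x := fun hb => not_clickAt_dir_of_isSource hx c (hb ▸ h)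
      exact fun hc => (ih hb).tail ((O.clickAt_dir_of_ne hb hc).1 h)
  exact fun a ha => hO a (hlift ha (hne ha))

theorem isAcyclic_of_rank (O : GraphOrientation G) (f : V → ℕ)
    (hf : ∀ x y, O.dir x y → f x < f y) : O.IsAcyclic := by
  have key : ∀ x y, TransGen O.dir x y → f x < f y := fun x y h =>
    h.trans_induction_on (hf _ _) fun _ _ => lt_trans
  exact fun a ha => lt_irrefl _ (key a a ha)

end GraphOrientation

abbrev ClickClasses {V : Type*} (G : SimpleGraph V) :=
  Quot fun A B : AcycGraphOrientation G => Click A.1 B.1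

namespace handleGraph

open GraphOrientation Relation

variable {V' : Type*} {G' : SimpleGraph V'} {v w : V'} {n : ℕ}

@[simp]
theorem adj_inl_inl {a b : V'} :
    (handleGraph G' v w (n + 1)).Adj (.inl a) (.inl b) ↔ G'.Adj a b := by
  simp only [handleGraph, SimpleGraph.fromRel_adj]
  exact ⟨fun ⟨_, h⟩ => h.elim id .symm, fun h => ⟨by simp [h.ne], .inl h⟩⟩

@[simp]
theorem adj_inl_inr {a : V'} {i : Fin (n + 1)} :
    (handleGraph G' v w (n + 1)).Adj (.inl a) (.inr i) ↔
      a = v ∧ (i : ℕ) = 0 ∨ a = w ∧ (i : ℕ) = n := by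
  simp [handleGraph]

@[simp]
theorem adj_inr_inl {a : V'} {i : Fin (n + 1)} :
    (handleGraph G' v w (n + 1)).Adj (.inr i) (.inl a) ↔
      a = v ∧ (i : ℕ) = 0 ∨ a = w ∧ (i : ℕ) = n := by
  simp [handleGraph]

@[simp]
theorem adj_inr_inr {i j : Fin (n + 1)} :
    (handleGraph G' v w (n + 1)).Adj (.inr i) (.inr j) ↔
      (j : ℕ) = i + 1 ∨ (i : ℕ) = j + 1 := by
  simp only [handleGraph, SimpleGraph.fromRel_adj, ne_eq, Sum.inr.injEq]
  exact ⟨fun h => h.2, fun h => ⟨fun hij => by subst hij; omega, h⟩⟩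

variable (v w n) in
/-- The cycle formed by the handle and `{v, w}`. As `Fin (n + 3)` wraps around, the pairs
`cyc j`, `cyc (j + 1)` run over all its edges, the last one being `{w, v}`. -/
def cyc (j : Fin (n + 3)) : V' ⊕ Fin (n + 1) :=
  if (j : ℕ) = 0 then .inl v
  else if h : (j : ℕ) ≤ n + 1 then .inr ⟨j - 1, by omega⟩
  else .inl w

theorem cyc_eq_inl_iff {j : Fin (n + 3)} {a : V'} :
    cyc v w n j = .inl a ↔ (j : ℕ) = 0 ∧ v = a ∨ (j : ℕ) = n + 2 ∧ w = a := by
  unfold cyc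
  split_ifs <;> grind

theorem cyc_eq_inr_iff {j : Fin (n + 3)} {i : Fin (n + 1)} :
    cyc v w n j = .inr i ↔ (j : ℕ) = i + 1 := by
  unfold cyc
  split_ifs <;> grind

theorem cyc_injective (hvw : v ≠ w) : Function.Injective (cyc v w n) := by
  intro j j' h
  apply Fin.ext
  rcases h' : cyc v w n j' with a | i
  · rw [h', cyc_eq_inl_iff] at h
    rw [cyc_eq_inl_iff] at h'
    grind
  · rw [h', cyc_eq_inr_iff] at h
    rw [cyc_eq_inr_iff] at h'
    omega

variable (v w) in
theorem exists_cyc_eq_or (x : V' ⊕ Fin (n + 1)) :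
    (∃ m, cyc v w n m = x) ∨ ∃ a, x = .inl a ∧ a ≠ v ∧ a ≠ w := by
  rcases x with a | i
  · by_cases hav : a = v
    · exact .inl ⟨0, by simp [cyc_eq_inl_iff, hav]⟩
    by_cases haw : a = w
    · exact .inl ⟨Fin.last _, by simp [cyc_eq_inl_iff, haw]⟩
    exact .inr ⟨a, rfl, hav, haw⟩
  · exact .inl ⟨⟨i + 1, by omega⟩, by simp [cyc_eq_inr_iff]⟩

theorem adj_cyc_add_one (hvw : G'.Adj v w) (j : Fin (n + 3)) :
    (handleGraph G' v w (n + 1)).Adj (cyc v w n j) (cyc v w n (j + 1)) := by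
  have := Fin.val_add_one_eq_ite j
  rcases h₁ : cyc v w n j with a | i <;> rcases h₂ : cyc v w n (j + 1) with b | i' <;>
    simp only [cyc_eq_inl_iff, cyc_eq_inr_iff] at h₁ h₂ <;>
    simp only [adj_inl_inl, adj_inl_inr, adj_inr_inl, adj_inr_inr]
  all_goals grind [SimpleGraph.Adj.symm]

theorem eq_inl_or_cyc_of_adj {x y : V' ⊕ Fin (n + 1)} (h : (handleGraph G' v w (n + 1)).Adj x y) :
    (∃ a b, x = .inl a ∧ y = .inl b) ∨
      ∃ j, cyc v w n j = x ∧ cyc v w n (j + 1) = y ∨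
        cyc v w n (j + 1) = x ∧ cyc v w n j = y := by
  rcases x with a | i <;> rcases y with b | i'
  · exact .inl ⟨a, b, rfl, rfl⟩
  all_goals right
  all_goals simp only [adj_inl_inr, adj_inr_inl, adj_inr_inr] at h
  · rcases h with ⟨rfl, hi⟩ | ⟨rfl, hi⟩
    · refine ⟨0, .inl ⟨?_, ?_⟩⟩ <;> simp [cyc_eq_inl_iff, cyc_eq_inr_iff, hi]
    · refine ⟨⟨n + 1, by omega⟩, .inr ⟨?_, ?_⟩⟩ <;>
        simp [cyc_eq_inl_iff, cyc_eq_inr_iff, Fin.val_add_one_eq_ite, hi]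
  · rcases h with ⟨rfl, hi⟩ | ⟨rfl, hi⟩
    · refine ⟨0, .inr ⟨?_, ?_⟩⟩ <;> simp [cyc_eq_inl_iff, cyc_eq_inr_iff, hi]
    · refine ⟨⟨n + 1, by omega⟩, .inl ⟨?_, ?_⟩⟩ <;>
        simp [cyc_eq_inl_iff, cyc_eq_inr_iff, Fin.val_add_one_eq_ite, hi]
  · rcases h with hi | hi
    · refine ⟨⟨i + 1, by omega⟩, .inl ⟨?_, ?_⟩⟩ <;>
        grind [cyc_eq_inr_iff, Fin.val_add_one_eq_ite]
    · refine ⟨⟨i' + 1, by omega⟩, .inr ⟨?_, ?_⟩⟩ <;>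
        grind [cyc_eq_inr_iff, Fin.val_add_one_eq_ite]

def restrict (O : GraphOrientation (handleGraph G' v w (n + 1))) : GraphOrientation G' where
  dir a b := O.dir (.inl a) (.inl b)
  consistent a b := by simpa using O.consistent (.inl a) (.inl b)
  asymm a b := O.asymm _ _

theorem isAcyclic_restrict {O : GraphOrientation (handleGraph G' v w (n + 1))}
    (hO : O.IsAcyclic) : (restrict O).IsAcyclic :=
  fun a ha => hO (.inl a) (ha.lift Sum.inl fun _ _ h => h)

theorem restrict_clickAt_inl (O : GraphOrientation (handleGraph G' v w (n + 1))) (a : V') :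
    restrict (O.clickAt (.inl a)) = (restrict O).clickAt a :=
  GraphOrientation.ext fun _ _ => by simp [restrict, GraphOrientation.clickAt]

theorem restrict_clickAt_inr (O : GraphOrientation (handleGraph G' v w (n + 1)))
    (i : Fin (n + 1)) : restrict (O.clickAt (.inr i)) = restrict O :=
  GraphOrientation.ext fun _ _ => O.clickAt_dir_of_ne Sum.inl_ne_inr Sum.inl_ne_inr

def Fwd (O : GraphOrientation (handleGraph G' v w (n + 1))) (j : Fin (n + 3)) : Prop :=
  O.dir (cyc v w n j) (cyc v w n (j + 1))

open Classical in
noncomputable def fwdSet (O : GraphOrientation (handleGraph G' v w (n + 1))) :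
    Finset (Fin (n + 3)) :=
  {j | Fwd O j}

@[simp]
theorem mem_fwdSet {O : GraphOrientation (handleGraph G' v w (n + 1))} {j : Fin (n + 3)} :
    j ∈ fwdSet O ↔ Fwd O j := by
  simp [fwdSet]

section Orientation

variable {O : GraphOrientation (handleGraph G' v w (n + 1))}

theorem dir_cyc_add_one_iff (hvw : G'.Adj v w) (j : Fin (n + 3)) :
    O.dir (cyc v w n (j + 1)) (cyc v w n j) ↔ ¬Fwd O j :=
  ⟨fun h hf => O.asymm _ _ hf h, O.dir_of_adj (adj_cyc_add_one hvw j).symm⟩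

theorem fwd_last_iff : Fwd O (Fin.last _) ↔ (restrict O).dir w v := by
  have h₁ : cyc v w n (Fin.last _) = .inl w := by simp [cyc_eq_inl_iff]
  have h₂ : cyc v w n (Fin.last _ + 1) = .inl v := by simp [Fin.last_add_one, cyc_eq_inl_iff]
  rw [Fwd, h₁, h₂]
  rfl

theorem ext_of_restrict_of_fwd (hvw : G'.Adj v w)
    {O' : GraphOrientation (handleGraph G' v w (n + 1))}
    (hr : restrict O = restrict O') (hf : ∀ j, Fwd O j ↔ Fwd O' j) : O = O' := by
  have key : ∀ {P Q : GraphOrientation (handleGraph G' v w (n + 1))}, restrict P = restrict Q →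
      (∀ j, Fwd P j ↔ Fwd Q j) → ∀ x y, P.dir x y → Q.dir x y := by
    intro P Q hr hf x y h
    rcases eq_inl_or_cyc_of_adj (P.adj_of_dir h) with
      ⟨a, b, rfl, rfl⟩ | ⟨j, ⟨rfl, rfl⟩ | ⟨rfl, rfl⟩⟩
    · exact (congrArg (·.dir a b) hr).mp h
    · exact (hf j).1 h
    · rw [dir_cyc_add_one_iff hvw] at h ⊢
      exact mt (hf j).2 h
  exact GraphOrientation.ext fun x y =>
    ⟨key hr hf x y, key hr.symm (fun j => (hf j).symm) x y⟩

theorem exists_fwd (hvw : G'.Adj v w) (hO : O.IsAcyclic) : ∃ j, Fwd O j := by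
  by_contra! h
  have hbwd : ∀ j, Function.swap O.dir (cyc v w n j) (cyc v w n (j + 1)) := fun j =>
    (dir_cyc_add_one_iff hvw j).2 (h j)
  exact hO _ (transGen_swap.1 (transGen_of_cycle _ hbwd))

theorem exists_not_fwd (hO : O.IsAcyclic) : ∃ j, ¬Fwd O j := by
  by_contra! h
  exact hO _ (transGen_of_cycle _ h)

theorem card_fwdSet_mem_Icc (hvw : G'.Adj v w) (hO : O.IsAcyclic) :
    #(fwdSet O) ∈ Icc 1 (n + 2) := by
  obtain ⟨j, hj⟩ := exists_fwd hvw hO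
  obtain ⟨j', hj'⟩ := exists_not_fwd hO
  have h₁ := card_pos.2 ⟨j, mem_fwdSet.2 hj⟩
  have h₂ := card_lt_univ_of_notMem (mt mem_fwdSet.1 hj')
  simp only [Fintype.card_fin] at h₂
  simp only [mem_Icc]
  omega

theorem fwd_of_isSource (hvw : G'.Adj v w) {m : Fin (n + 3)} (hm : O.IsSource (cyc v w n m)) :
    Fwd O m :=
  O.dir_of_adj (adj_cyc_add_one hvw m) (hm _)

theorem isSource_cyc_add_one (hvw : G'.Adj v w) {j : Fin (n + 3)} (hj : (j : ℕ) ≤ n)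
    (h₁ : ¬Fwd O j) (h₂ : Fwd O (j + 1)) : O.IsSource (cyc v w n (j + 1)) := by
  have hinj := cyc_injective (n := n) hvw.ne
  intro u hu
  rcases eq_inl_or_cyc_of_adj (O.adj_of_dir hu) with
    ⟨a, b, -, hb⟩ | ⟨k, ⟨rfl, hk⟩ | ⟨rfl, hk⟩⟩
  · rw [cyc_eq_inl_iff, Fin.val_add_one_eq_ite] at hb
    grind
  · obtain rfl := add_right_cancel (hinj hk)
    exact h₁ hu
  · obtain rfl := hinj hk
    exact (dir_cyc_add_one_iff hvw _).1 hu h₂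

theorem fwd_clickAt_cyc (hvw : G'.Adj v w) {m : Fin (n + 3)} (hm : O.IsSource (cyc v w n m))
    (j : Fin (n + 3)) : Fwd (O.clickAt (cyc v w n m)) j ↔ j + 1 = m ∨ j ≠ m ∧ Fwd O j := by
  have hinj : ∀ a b, cyc v w n a = cyc v w n b ↔ a = b := fun _ _ =>
    (cyc_injective hvw.ne).eq_iff
  have h₁ : j + 1 = m → ¬Fwd O j := by rintro rfl; exact hm _
  have h₂ : j = m → Fwd O j := by rintro rfl; exact fwd_of_isSource hvw hm
  have h₃ : j = m → j + 1 ≠ m := by rintro rfl; exact Fin.add_one_ne_self j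
  change ((_ ∨ _) ∧ _) ∨ (_ ∧ _ ∧ Fwd O j) ↔ _
  simp only [hinj, ne_eq, dir_cyc_add_one_iff hvw]
  tauto

theorem fwdSet_clickAt_cyc (hvw : G'.Adj v w) {m : Fin (n + 3)}
    (hm : O.IsSource (cyc v w n m)) :
    fwdSet (O.clickAt (cyc v w n m)) = insert (m - 1) ((fwdSet O).erase m) := by
  ext j
  simp [fwd_clickAt_cyc hvw hm, eq_sub_iff_add_eq]

theorem fwd_clickAt_inl {a : V'} (hav : a ≠ v) (haw : a ≠ w) (j : Fin (n + 3)) :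
    Fwd (O.clickAt (.inl a)) j ↔ Fwd O j := by
  have hne : ∀ j, cyc v w n j ≠ .inl a := fun j h => by
    rw [cyc_eq_inl_iff] at h
    grind
  exact O.clickAt_dir_of_ne (hne j) (hne (j + 1))

theorem card_fwdSet_clickAt (hvw : G'.Adj v w) {x : V' ⊕ Fin (n + 1)} (hx : O.IsSource x) :
    #(fwdSet (O.clickAt x)) = #(fwdSet O) := by
  rcases exists_cyc_eq_or v w x with ⟨m, rfl⟩ | ⟨a, rfl, hav, haw⟩
  · have hm := mem_fwdSet.2 (fwd_of_isSource hvw hx)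
    have hm' : m - 1 ∉ (fwdSet O).erase m := fun h => by
      have := mem_fwdSet.1 (mem_of_mem_erase h)
      exact hx _ (by simpa [Fwd] using this)
    rw [fwdSet_clickAt_cyc hvw hx, card_insert_of_notMem hm', card_erase_add_one hm]
  · congr 1
    ext j
    simp [fwd_clickAt_inl hav haw]

theorem sum_fwdSet_clickAt_inr (hvw : G'.Adj v w) {i : Fin (n + 1)}
    (hi : O.IsSource (.inr i)) :
    ∑ j ∈ fwdSet (O.clickAt (.inr i)), (j : ℕ) + 1 = ∑ j ∈ fwdSet O, (j : ℕ) := by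
  set m : Fin (n + 3) := ⟨i + 1, by omega⟩
  have hm : cyc v w n m = .inr i := by simp [m, cyc_eq_inr_iff]
  rw [← hm] at hi ⊢
  have hmem := mem_fwdSet.2 (fwd_of_isSource hvw hi)
  have hsub : ((m - 1 : Fin (n + 3)) : ℕ) = i := by
    rw [Fin.coe_sub_one, if_neg (Fin.ne_of_val_ne (by simp [m]))]
    simp [m]
  have hnotMem : m - 1 ∉ (fwdSet O).erase m :=
    fun h => hi _ (by simpa [Fwd] using mem_fwdSet.1 (mem_of_mem_erase h))
  rw [fwdSet_clickAt_cyc hvw hi, sum_insert hnotMem, hsub, ← add_sum_erase _ _ hmem]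
  ring

end Orientation

/-- The extension of `r` in which the edges `0, …, p - 1` of `cyc` point forward and the
other handle edges backward. -/
def canon (hvw : v ≠ w) (r : GraphOrientation G') (p : ℕ) :
    GraphOrientation (handleGraph G' v w (n + 1)) where
  dir
    | .inl a, .inl b => r.dir a b
    | .inl a, .inr i =>
      a = v ∧ (i : ℕ) = 0 ∧ 0 < p ∨ a = w ∧ (i : ℕ) = n ∧ p ≤ n + 1
    | .inr i, .inl a =>
      a = v ∧ (i : ℕ) = 0 ∧ p = 0 ∨ a = w ∧ (i : ℕ) = n ∧ n + 1 < p
    | .inr i, .inr j => (j : ℕ) = i + 1 ∧ (j : ℕ) < p ∨ (i : ℕ) = j + 1 ∧ p ≤ i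
  consistent := by
    rintro (a | i) (b | j)
    · simpa using r.consistent a b
    all_goals simp only [adj_inl_inr, adj_inr_inl, adj_inr_inr]; grind
  asymm := by
    rintro (a | i) (b | j)
    · exact r.asymm a b
    all_goals grind

section Canon

variable {hvw : v ≠ w} {r : GraphOrientation G'} {p : ℕ}

theorem restrict_canon : restrict (canon (n := n) hvw r p) = r :=
  GraphOrientation.ext fun _ _ => Iff.rfl

theorem fwd_canon_iff (j : Fin (n + 3)) :
    Fwd (canon hvw r p) j ↔
      (j : ℕ) ≤ n + 1 ∧ (j : ℕ) < p ∨ (j : ℕ) = n + 2 ∧ r.dir w v := by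
  have := Fin.val_add_one_eq_ite j
  unfold Fwd
  rcases h₁ : cyc v w n j with a | i <;> rcases h₂ : cyc v w n (j + 1) with b | i' <;>
    simp only [cyc_eq_inl_iff, cyc_eq_inr_iff] at h₁ h₂ <;> simp only [canon]
  all_goals grind

theorem card_fwdSet_canon_of_not_dir (h : ¬r.dir w v) (hp : p ≤ n + 2) :
    #(fwdSet (canon (n := n) hvw r p)) = p := by
  have : fwdSet (canon (n := n) hvw r p) = Iio ⟨p, by omega⟩ := by
    ext j
    simp only [mem_fwdSet, fwd_canon_iff, mem_Iio, Fin.lt_def, h, and_false, or_false]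
    omega
  rw [this, Fin.card_Iio]

theorem card_fwdSet_canon_of_dir (h : r.dir w v) (hp : p ≤ n + 2) :
    #(fwdSet (canon (n := n) hvw r p)) = p + 1 := by
  have : fwdSet (canon (n := n) hvw r p) = insert (Fin.last _) (Iio ⟨p, by omega⟩) := by
    ext j
    simp only [mem_fwdSet, fwd_canon_iff, mem_insert, mem_Iio, Fin.lt_def, Fin.ext_iff,
      Fin.val_last, h, and_true]
    omega
  rw [this, card_insert_of_notMem (by simp [Fin.lt_def]; omega), Fin.card_Iio]

/-- Ranks witnessing acyclicity: when `p = 0` or `p = n + 2` the handle acts as an extra edge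
`w → v` or `v → w` of `G'`; otherwise the handle vertex `p` is a sink above all of `G'`. -/
theorem isAcyclic_canon [Finite V'] (hr : r.IsAcyclic) (hp : p ≤ n + 2)
    (h₀ : p = 0 → ¬TransGen r.dir v w) (h₁ : p = n + 2 → ¬TransGen r.dir w v) :
    (canon (n := n) hvw r p).IsAcyclic := by
  rcases Nat.eq_zero_or_pos p with rfl | hp₀
  · obtain ⟨f, hf, hwv⟩ := exists_rank_of_not_transGen hr hvw.symm (h₀ rfl) (n + 2)
    refine isAcyclic_of_rank _ (Sum.elim f fun i => f w + (n + 1 - i)) ?_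
    rintro (a | i) (b | j) h
    · simpa using (hf a b h).trans_le' (Nat.le_add_right _ _)
    all_goals simp only [canon] at h; grind
  rcases eq_or_ne p (n + 2) with rfl | hp₁
  · obtain ⟨f, hf, hvw'⟩ := exists_rank_of_not_transGen hr hvw (h₁ rfl) (n + 2)
    refine isAcyclic_of_rank _ (Sum.elim f fun i => f v + i + 1) ?_
    rintro (a | i) (b | j) h
    · simpa using (hf a b h).trans_le' (Nat.le_add_right _ _)
    all_goals simp only [canon] at h; grind
  · obtain ⟨f, hf⟩ := exists_rank hr 0
    obtain ⟨M, hM⟩ := (Set.finite_range f).bddAbove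
    have hM' : ∀ a, f a ≤ M := fun a => hM ⟨a, rfl⟩
    refine isAcyclic_of_rank _
      (Sum.elim f fun i => M + n + 3 - if i + 1 ≤ p then p - (i + 1) else i + 1 - p) ?_
    rintro (a | i) (b | j) h
    · exact hf a b h
    all_goals simp only [canon] at h
    all_goals grind

end Canon

open Classical in
/-- The canonical extension of `r` with `ν` forward edges on `cyc`; the edge `{w, v}` is one of
them exactly when `r` orients it as `w → v`. -/
noncomputable def canonOf (hvw : v ≠ w) (r : GraphOrientation G') (ν : ℕ) :
    GraphOrientation (handleGraph G' v w (n + 1)) :=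
  canon hvw r (if r.dir w v then ν - 1 else ν)

section CanonOf

variable {r : GraphOrientation G'} {ν : ℕ}

theorem restrict_canonOf (hvw : v ≠ w) : restrict (canonOf (n := n) hvw r ν) = r :=
  restrict_canon

theorem card_fwdSet_canonOf (hvw : v ≠ w) (hν : ν ∈ Icc 1 (n + 2)) :
    #(fwdSet (canonOf (n := n) hvw r ν)) = ν := by
  rw [mem_Icc] at hν
  unfold canonOf
  split_ifs with h
  · rw [card_fwdSet_canon_of_dir h (by omega)]
    omega
  · exact card_fwdSet_canon_of_not_dir h hν.2

theorem isAcyclic_canonOf [Finite V'] (hvw : G'.Adj v w) (hr : r.IsAcyclic)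
    (hν : ν ∈ Icc 1 (n + 2)) : (canonOf (n := n) hvw.ne r ν).IsAcyclic := by
  rw [mem_Icc] at hν
  unfold canonOf
  split_ifs with h
  · exact isAcyclic_canon hr (by omega) (fun _ hvw' => hr v (hvw'.tail h)) (by omega)
  · exact isAcyclic_canon hr hν.2 (by omega) fun _ hwv => hr w (hwv.tail (r.dir_of_adj hvw h))

theorem isSource_canonOf_inl (hvw : G'.Adj v w) {a : V'} (ha : r.IsSource a)
    (hν : ν ∈ Icc 1 (n + 2)) : (canonOf (n := n) hvw.ne r ν).IsSource (.inl a) := by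
  rw [mem_Icc] at hν
  rintro (b | i) h
  · exact ha b h
  · have hv : a = v → ¬r.dir w v := fun h' => h' ▸ ha w
    have hw : a = w → r.dir w v := fun h' => r.dir_of_adj hvw.symm (h' ▸ ha v)
    simp only [canonOf, canon] at h
    split_ifs at h <;> grind

theorem exists_eq_canon_of_forall_not_isSource (hvw : G'.Adj v w)
    {O : GraphOrientation (handleGraph G' v w (n + 1))} (h : ∀ i, ¬O.IsSource (.inr i)) :
    ∃ p ≤ n + 2, O = canon hvw.ne (restrict O) p := by
  have hmono : ∀ m, m + 1 < n + 2 → (∃ hm : m + 1 < n + 3, Fwd O ⟨m + 1, hm⟩) →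
      ∃ hm : m < n + 3, Fwd O ⟨m, hm⟩ := by
    rintro m hm ⟨_, hfwd⟩
    refine ⟨by omega, ?_⟩
    by_contra hm'
    apply h ⟨m, by omega⟩
    have hsucc : (⟨m, by omega⟩ + 1 : Fin (n + 3)) = ⟨m + 1, by omega⟩ := by
      simp [Fin.ext_iff, Fin.val_add_one_eq_ite]
      omega
    have := isSource_cyc_add_one hvw (by simp; omega) hm' (hsucc ▸ hfwd)
    rwa [hsucc, show cyc v w n ⟨m + 1, _⟩ = .inr ⟨m, _⟩ by simp [cyc_eq_inr_iff]] at this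
  obtain ⟨p, hp, hfwd⟩ := Nat.exists_forall_iff_lt_of_succ_imp
    (P := fun m => ∃ hm : m < n + 3, Fwd O ⟨m, hm⟩) hmono
  refine ⟨p, hp, ext_of_restrict_of_fwd hvw restrict_canon.symm fun j => ?_⟩
  rw [fwd_canon_iff]
  by_cases hj : (j : ℕ) ≤ n + 1
  · rw [← hfwd j (by omega)]
    constructor
    · exact fun h' => .inl ⟨hj, j.2, h'⟩
    · rintro (⟨_, _, h'⟩ | ⟨h', -⟩)
      · exact h'
      · omega
  · obtain rfl : j = Fin.last _ := Fin.ext (by simp; omega)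
    simp [fwd_last_iff]

theorem eq_canonOf_of_forall_not_isSource (hvw : G'.Adj v w)
    {O : GraphOrientation (handleGraph G' v w (n + 1))} (h : ∀ i, ¬O.IsSource (.inr i)) :
    O = canonOf hvw.ne (restrict O) #(fwdSet O) := by
  obtain ⟨p, hp, hO⟩ := exists_eq_canon_of_forall_not_isSource hvw h
  generalize restrict O = r at hO
  subst hO
  rw [canonOf]
  congr 1
  split_ifs with h
  · rw [card_fwdSet_canon_of_dir h hp, Nat.add_sub_cancel]
  · rw [card_fwdSet_canon_of_not_dir h hp]

end CanonOf

def restrictAcyc (A : AcycGraphOrientation (handleGraph G' v w (n + 1))) :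
    AcycGraphOrientation G' :=
  ⟨restrict A.1, isAcyclic_restrict A.2⟩

theorem quotMk_restrictAcyc_eq_of_click
    {A B : AcycGraphOrientation (handleGraph G' v w (n + 1))} (h : Click A.1 B.1) :
    (Quot.mk _ (restrictAcyc A) : ClickClasses G') = Quot.mk _ (restrictAcyc B) := by
  obtain ⟨x, hx, hB⟩ := click_iff.1 h
  rcases x with a | i
  · refine Quot.sound (click_iff.2 ⟨a, fun b => hx (.inl b), ?_⟩)
    simp only [restrictAcyc, hB, restrict_clickAt_inl]
  · exact congrArg _ (Subtype.ext (by simp only [restrictAcyc, hB, restrict_clickAt_inr]))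

variable [Finite V']

noncomputable def canonAcyc (hvw : G'.Adj v w) (r : AcycGraphOrientation G') {ν : ℕ}
    (hν : ν ∈ Icc 1 (n + 2)) : AcycGraphOrientation (handleGraph G' v w (n + 1)) :=
  ⟨canonOf hvw.ne r.1 ν, isAcyclic_canonOf hvw r.2 hν⟩

theorem quotMk_eq_canonAcyc (hvw : G'.Adj v w)
    (A : AcycGraphOrientation (handleGraph G' v w (n + 1))) :
    (Quot.mk _ A : ClickClasses _) =
      Quot.mk _ (canonAcyc hvw (restrictAcyc A) (card_fwdSet_mem_Icc hvw A.2)) := by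
  induction hs : ∑ j ∈ fwdSet A.1, (j : ℕ) using Nat.strong_induction_on generalizing A with
  | _ s ih =>
  by_cases hsrc : ∃ i, A.1.IsSource (.inr i)
  · obtain ⟨i, hi⟩ := hsrc
    let B : AcycGraphOrientation _ := ⟨A.1.clickAt (.inr i), A.2.clickAt hi⟩
    calc (Quot.mk _ A : ClickClasses _) = Quot.mk _ B := Quot.sound (click_iff.2 ⟨_, hi, rfl⟩)
      _ = _ := ih _ (by rw [← hs, ← sum_fwdSet_clickAt_inr hvw hi]; exact Nat.lt_add_one _)
        B rfl
      _ = _ := by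
        simp only [canonAcyc, restrictAcyc, B, restrict_clickAt_inr, card_fwdSet_clickAt hvw hi]
  · exact congrArg _ (Subtype.ext (eq_canonOf_of_forall_not_isSource hvw (not_exists.1 hsrc)))

theorem quotMk_canonAcyc_eq_of_click (hvw : G'.Adj v w) {r₁ r₂ : AcycGraphOrientation G'}
    (h : Click r₁.1 r₂.1) {ν : ℕ} (hν : ν ∈ Icc 1 (n + 2)) :
    (Quot.mk _ (canonAcyc hvw r₁ hν) : ClickClasses (handleGraph G' v w (n + 1))) =
      Quot.mk _ (canonAcyc hvw r₂ hν) := by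
  obtain ⟨a, ha, hr₂⟩ := click_iff.1 h
  have hsrc := isSource_canonOf_inl (n := n) hvw ha hν
  let B : AcycGraphOrientation (handleGraph G' v w (n + 1)) :=
    ⟨(canonOf hvw.ne r₁.1 ν).clickAt (.inl a), (canonAcyc hvw r₁ hν).2.clickAt hsrc⟩
  calc (Quot.mk _ (canonAcyc hvw r₁ hν) : ClickClasses _) = Quot.mk _ B :=
        Quot.sound (click_iff.2 ⟨_, hsrc, rfl⟩)
    _ = _ := quotMk_eq_canonAcyc hvw B
    _ = _ := by
      simp only [canonAcyc, restrictAcyc, B, restrict_clickAt_inl, restrict_canonOf, ← hr₂,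
        card_fwdSet_clickAt hvw hsrc, card_fwdSet_canonOf hvw.ne hν]

theorem succ_mem_Icc (m : Fin (n + 2)) : (m : ℕ) + 1 ∈ Icc 1 (n + 2) := by
  simp only [mem_Icc]
  omega

noncomputable def clickClassesEquiv (hvw : G'.Adj v w) :
    ClickClasses (handleGraph G' v w (n + 1)) ≃ ClickClasses G' × Fin (n + 2) where
  toFun := Quot.lift
    (fun A => (Quot.mk _ (restrictAcyc A), ⟨#(fwdSet A.1) - 1, by
      have := mem_Icc.1 (card_fwdSet_mem_Icc hvw A.2); omega⟩))
    fun A B h => by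
      obtain ⟨x, hx, hB⟩ := click_iff.1 h
      simp only [quotMk_restrictAcyc_eq_of_click h, hB, card_fwdSet_clickAt hvw hx]
  invFun p := Quot.lift (fun r => Quot.mk _ (canonAcyc hvw r (succ_mem_Icc p.2)))
    (fun _ _ h => quotMk_canonAcyc_eq_of_click hvw h _) p.1
  left_inv := Quot.ind fun A => by
    refine Eq.trans ?_ (quotMk_eq_canonAcyc hvw A).symm
    have := mem_Icc.1 (card_fwdSet_mem_Icc hvw A.2)
    dsimp only
    congr 2
    omega
  right_inv := fun ⟨q, m⟩ => by
    induction q using Quot.ind with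
    | mk r =>
    simp only [canonAcyc, restrictAcyc, restrict_canonOf,
      card_fwdSet_canonOf hvw.ne (succ_mem_Icc m)]
    rfl

end handleGraph

theorem kappa_handle {V' : Type*} [Fintype V'] (G' : SimpleGraph V') (v w : V')
    (hvw : G'.Adj v w) (k : ℕ) (hk : 1 ≤ k) :
    kappa (handleGraph G' v w k) = (k + 1) * kappa G' := by
  obtain ⟨n, rfl⟩ : ∃ n, k = n + 1 := ⟨k - 1, by omega⟩
  rw [kappa, kappa, Nat.card_congr (handleGraph.clickClassesEquiv hvw), Nat.card_prod,
    Nat.card_fin, mul_comm]
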